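/- For a finite simple undirected graph G that is not Hamiltonian, the Hamiltonian completion number of G equals the path partition number of G: HCN(G) = PPN(G). -/

import Mathlib

open SimpleGraph

variable {V : Type*}

/-- A list of vertices forming a path in `G`: nonempty, with distinct vertices,
and consecutive vertices adjacent. -/
def IsPathList (G : SimpleGraph V) (l : List V) : Prop :=
  l ≠ [] ∧ l.Nodup ∧ l.Chain' G.Adj

/-- A path partition of `G`: a list of pairwise vertex-disjoint paths covering
every vertex exactly once. -/
def IsPathPartition (G : SimpleGraph V) (L : List (List V)) : Prop :=
  (∀ l ∈ L, IsPathList G l) ∧ L.flatten.Nodup ∧ ∀ v : V, v ∈ L.flatten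

/-- The path partition number of `G`: the minimum number of paths in a path
partition of `G`. -/
noncomputable def ppn (G : SimpleGraph V) : ℕ :=
  sInf {k | ∃ L : List (List V), IsPathPartition G L ∧ L.length = k}

/-- A graph is Hamiltonian iff it contains a Hamiltonian cycle. -/
def IsHamiltonianGraph [DecidableEq V] (G : SimpleGraph V) : Prop :=
  ∃ (v : V) (p : G.Walk v v), p.IsHamiltonianCycle

/-- The Hamiltonian completion number of `G`: the minimum number of new edges
(between distinct vertices, not already present in `G`) whose addition makes
`G` Hamiltonian. -/
noncomputable def hcn [DecidableEq V] (G : SimpleGraph V) : ℕ :=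
  sInf {k | ∃ E' : Finset (Sym2 V), E'.card = k ∧
    (∀ e ∈ E', ¬ e.IsDiag ∧ e ∉ G.edgeSet) ∧
    IsHamiltonianGraph (G ⊔ SimpleGraph.fromEdgeSet ↑E')}

/-! If `G` is not Hamiltonian, a Hamiltonian cycle of `G ⊔ E'` uses some `k ≥ 1` edges outside
`G`, and deleting them leaves `k` paths of `G` that partition the vertices, so `ppn G ≤ hcn G`.
Conversely, the `k` paths of a path partition, concatenated and closed up, form a Hamiltonian cycle
of `G` plus at most `k` new edges (the `k - 1` junctions and the closing edge), so
`hcn G ≤ ppn G`. -/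

lemma isPathPartition_of_isChain {G : SimpleGraph V} {L : List (List V)}
    (hL : ∀ l ∈ L, l ≠ [] ∧ l.IsChain G.Adj) (hnd : L.flatten.Nodup)
    (hcov : ∀ v, v ∈ L.flatten) : IsPathPartition G L :=
  ⟨fun l hl => ⟨(hL l hl).1, (List.sublist_flatten_of_mem hl).nodup hnd, (hL l hl).2⟩, hnd, hcov⟩

lemma IsPathPartition.ppn_le {G : SimpleGraph V} {L : List (List V)} (hL : IsPathPartition G L) :
    ppn G ≤ L.length := by
  unfold ppn
  apply Nat.sInf_le
  exact ⟨L, hL, rfl⟩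

lemma exists_isPathPartition_length_eq_ppn [Fintype V] (G : SimpleGraph V) :
    ∃ L, IsPathPartition G L ∧ L.length = ppn G := by
  refine Nat.sInf_mem (s := {k | ∃ L, IsPathPartition G L ∧ L.length = k})
    ⟨_, Finset.univ.toList.map ([·]), ?_, rfl⟩
  have hflat : (Finset.univ.toList.map ([·] : V → List V)).flatten = Finset.univ.toList :=
    List.flatMap_singleton' _
  refine isPathPartition_of_isChain (by simp) ?_ (by simp [hflat])
  simpa [hflat] using Finset.univ.nodup_toList

namespace SimpleGraph.Walk

variable {G H : SimpleGraph V} {u v : V}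

lemma exists_eq_append_cons_of_mem_edges {e : Sym2 V} :
    ∀ {u v : V} {p : G.Walk u v}, e ∈ p.edges →
      ∃ (a b : V) (h : G.Adj a b) (p₁ : G.Walk u a) (p₂ : G.Walk b v),
        e = s(a, b) ∧ p = p₁.append (cons h p₂)
  | _, _, nil, he => by simp at he
  | _, _, cons h q, he => by
    rw [edges_cons, List.mem_cons] at he
    rcases he with rfl | he
    · exact ⟨_, _, h, nil, q, rfl, rfl⟩
    · obtain ⟨a, b, h', p₁, p₂, rfl, rfl⟩ := exists_eq_append_cons_of_mem_edges he
      exact ⟨a, b, h', cons h p₁, p₂, rfl, rfl⟩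

lemma IsHamiltonianCycle.transfer [DecidableEq V] {p : G.Walk u u} (hp : p.IsHamiltonianCycle)
    (hpH : ∀ e ∈ p.edges, e ∈ H.edgeSet) : (p.transfer H hpH).IsHamiltonianCycle := by
  rw [isHamiltonianCycle_iff_isCycle_and_support_count_tail_eq_one] at hp ⊢
  exact ⟨hp.1.transfer hpH, by simpa [support_transfer] using hp.2⟩

lemma exists_flatten_eq_support (G : SimpleGraph V) [DecidableRel G.Adj] :
    ∀ {u v : V} (w : H.Walk u v), ∃ L : List (List V), L.flatten = w.support ∧
      (∀ l ∈ L, l ≠ [] ∧ l.IsChain G.Adj) ∧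
      L.length ≤ (w.edges.filter (· ∉ G.edgeSet)).length + 1
  | u, _, nil => ⟨[[u]], by simp, by simp, by simp⟩
  | u, _, cons (v := x) h q => by
    obtain ⟨L, hflat, hchain, hlen⟩ := exists_flatten_eq_support G q
    obtain ⟨l, L, rfl⟩ := List.exists_cons_of_ne_nil (show L ≠ [] by rintro rfl; simp at hflat)
    obtain ⟨y, l, rfl⟩ := List.exists_cons_of_ne_nil (hchain _ List.mem_cons_self).1
    rw [← q.cons_tail_support, List.flatten_cons, List.cons_append, List.cons_eq_cons] at hflat
    obtain ⟨rfl, hflat⟩ := hflat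
    have hsupp : (cons h q).support = u :: y :: (l ++ L.flatten) := by
      rw [support_cons, ← q.cons_tail_support, hflat]
    by_cases hux : G.Adj u y
    · refine ⟨(u :: y :: l) :: L, by simp [hsupp], ?_, ?_⟩
      · simpa [hux] using hchain
      · simpa [List.filter_cons, hux] using hlen
    · refine ⟨[u] :: (y :: l) :: L, by simp [hsupp], ?_, ?_⟩
      · simpa using hchain
      · simpa [List.filter_cons, hux] using hlen

lemma IsTrail.length_filter_notMem_edgeSet_le [DecidableEq V] [DecidableRel G.Adj]
    {E : Finset (Sym2 V)} {p : (G ⊔ fromEdgeSet ↑E).Walk u v} (hp : p.IsTrail) :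
    (p.edges.filter (· ∉ G.edgeSet)).length ≤ E.card := by
  rw [← List.toFinset_card_of_nodup (hp.edges_nodup.filter _)]
  refine Finset.card_le_card fun e he => ?_
  rw [List.mem_toFinset, List.mem_filter, decide_eq_true_iff] at he
  have := p.edges_subset_edgeSet he.1
  rw [edgeSet_sup, edgeSet_fromEdgeSet] at this
  exact this.resolve_left he.2 |>.1

lemma IsHamiltonianCycle.exists_isPathPartition [DecidableEq V] [DecidableRel G.Adj]
    {p : H.Walk u u} (hp : p.IsHamiltonianCycle) {e : Sym2 V} (he : e ∈ p.edges) (heG : e ∉ G.edgeSet) :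
    ∃ L, IsPathPartition G L ∧ L.length ≤ (p.edges.filter (· ∉ G.edgeSet)).length := by
  obtain ⟨a, b, h, p₁, p₂, rfl, rfl⟩ := exists_eq_append_cons_of_mem_edges he
  -- cutting the cycle at `s(a, b)` leaves the Hamiltonian path `p₂.append p₁` from `b` to `a`
  obtain ⟨L, hflat, hchain, hlen⟩ := (p₂.append p₁).exists_flatten_eq_support G
  have hperm : (p₂.append p₁).support.Perm (p₁.append (cons h p₂)).support.tail := by
    rw [support_append, support_append, support_cons, List.tail_cons, ← p₁.cons_tail_support]
    exact List.perm_append_comm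
  have hcount := (isHamiltonianCycle_iff_isCycle_and_support_count_tail_eq_one.mp hp).2
  refine ⟨L, isPathPartition_of_isChain hchain ?_ fun w => ?_, ?_⟩
  · rw [hflat]; exact hperm.nodup_iff.mpr hp.isCycle.support_nodup
  · rw [hflat, hperm.mem_iff]; exact List.count_pos_iff.mp (by rw [hcount w]; exact one_pos)
  · simp [edges_append, List.filter_append, heG] at hlen ⊢
    omega

end SimpleGraph.Walk

open SimpleGraph.Walk

theorem exists_isPathPartition_length_le_of_isHamiltonianGraph_sup [DecidableEq V]
    {G : SimpleGraph V} {E : Finset (Sym2 V)} (hG : ¬ IsHamiltonianGraph G)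
    (hE : IsHamiltonianGraph (G ⊔ fromEdgeSet ↑E)) :
    ∃ L, IsPathPartition G L ∧ L.length ≤ E.card := by
  classical
  obtain ⟨v, p, hp⟩ := hE
  obtain ⟨e, he, heG⟩ : ∃ e ∈ p.edges, e ∉ G.edgeSet := by
    by_contra! h
    exact hG ⟨v, p.transfer G h, hp.transfer h⟩
  obtain ⟨L, hL, hlen⟩ := hp.exists_isPathPartition he heG
  exact ⟨L, hL, hlen.trans hp.isCycle.isTrail.length_filter_notMem_edgeSet_le⟩

lemma exists_isChain_flatten_sup_fromEdgeSet [DecidableEq V] (G : SimpleGraph V) :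
    ∀ {L : List (List V)}, (∀ l ∈ L, l.IsChain G.Adj) → L.flatten.Nodup →
      ∃ J : Finset (Sym2 V), J.card ≤ L.length - 1 ∧
        L.flatten.IsChain (G ⊔ fromEdgeSet ↑J).Adj
  | [], _, _ => ⟨∅, by simp, by simp⟩
  | l :: L, hL, hnd => by
    rw [List.flatten_cons] at hnd ⊢
    obtain ⟨J, hJ, hchain⟩ := exists_isChain_flatten_sup_fromEdgeSet G
      (fun m hm => hL m (List.mem_cons_of_mem _ hm)) (List.nodup_append.mp hnd).2.1
    have hl (K : SimpleGraph V) : l.IsChain (G ⊔ K).Adj :=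
      (hL l List.mem_cons_self).imp fun _ _ h => Or.inl h
    rcases List.eq_nil_or_concat l with rfl | ⟨l, a, rfl⟩
    · exact ⟨J, by simp; omega, by simpa using hchain⟩
    cases hb : L.flatten with
    | nil => exact ⟨J, by simp; omega, by simpa using hl _⟩
    | cons b t =>
      have hL0 : L ≠ [] := by rintro rfl; simp at hb
      have hab : a ≠ b := by
        rintro rfl; rw [hb] at hnd; simp [List.nodup_append] at hnd
      refine ⟨insert s(a, b) J, ?_, ?_⟩
      · have := List.length_pos_of_ne_nil hL0
        grind [Finset.card_insert_le]
      · have hmono : G ⊔ fromEdgeSet ↑J ≤ G ⊔ fromEdgeSet ↑(insert s(a, b) J) :=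
          sup_le_sup_left (fromEdgeSet_mono (by simp)) _
        rw [hb] at hchain
        refine List.isChain_append.mpr ⟨hl _, hchain.imp fun _ _ h => hmono h, ?_⟩
        simp [fromEdgeSet_adj, hab]

lemma isHamiltonianGraph_of_isHamiltonian_of_adj [Fintype V] [DecidableEq V]
    {H : SimpleGraph V} {x y : V} {w : H.Walk x y} (hw : w.IsHamiltonian) (hyx : H.Adj y x)
    (h3 : 3 ≤ Fintype.card V) : IsHamiltonianGraph H := by
  refine ⟨y, cons hyx w, ?_⟩
  rw [isHamiltonianCycle_iff_isCycle_and_length_eq, isCycle_iff_isPath_tail_and_le_length]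
  have := hw.length_eq
  simp [hw.isPath]
  omega

lemma IsPathPartition.exists_isHamiltonianGraph_sup [Fintype V] [DecidableEq V]
    {G : SimpleGraph V} {L : List (List V)} (hL : IsPathPartition G L)
    (h3 : 3 ≤ Fintype.card V) :
    ∃ J : Finset (Sym2 V), J.card ≤ L.length ∧ IsHamiltonianGraph (G ⊔ fromEdgeSet ↑J) := by
  obtain ⟨hpaths, hnd, hcov⟩ := hL
  obtain ⟨J, hJ, hchain⟩ :=
    exists_isChain_flatten_sup_fromEdgeSet G (fun l hl => (hpaths l hl).2.2) hnd
  obtain ⟨v⟩ : Nonempty V := Fintype.card_pos_iff.mp (by omega)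
  have hne : L.flatten ≠ [] := List.ne_nil_of_mem (hcov v)
  set x := L.flatten.head hne
  set y := L.flatten.getLast hne
  have hL0 : L ≠ [] := by rintro rfl; simp at hne
  have hyx : y ≠ x := by
    intro h
    obtain ⟨z, hz⟩ := (hnd.head_eq_getLast_iff hne).mp h.symm
    have : Fintype.card V ≤ 1 := Fintype.card_le_one_iff.mpr fun a b => by
      have ha := hcov a; have hb := hcov b; simp_all
    omega
  refine ⟨insert s(y, x) J, (Finset.card_insert_le _ _).trans
    (by have := List.length_pos_of_ne_nil hL0; omega), ?_⟩
  have hmono : G ⊔ fromEdgeSet ↑J ≤ G ⊔ fromEdgeSet ↑(insert s(y, x) J) :=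
    sup_le_sup_left (fromEdgeSet_mono (by simp)) _
  let w := ofSupport L.flatten hne (hchain.imp fun _ _ h => hmono h)
  have hw : w.IsHamiltonian := fun a => by
    simpa [w] using List.count_eq_one_of_mem hnd (hcov a)
  exact isHamiltonianGraph_of_isHamiltonian_of_adj hw
    (Or.inr ((fromEdgeSet_adj _).mpr ⟨Finset.mem_insert_self _ _, hyx⟩)) h3

lemma exists_completion_card_le [DecidableEq V] {G : SimpleGraph V} {J : Finset (Sym2 V)}
    (hJ : IsHamiltonianGraph (G ⊔ fromEdgeSet ↑J)) :
    ∃ E : Finset (Sym2 V), E.card ≤ J.card ∧ (∀ e ∈ E, ¬ e.IsDiag ∧ e ∉ G.edgeSet) ∧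
      IsHamiltonianGraph (G ⊔ fromEdgeSet ↑E) := by
  classical
  refine ⟨J.filter fun e => ¬ e.IsDiag ∧ e ∉ G.edgeSet, Finset.card_filter_le _ _,
    fun e he => (Finset.mem_filter.mp he).2, ?_⟩
  convert hJ using 1
  ext a b
  by_cases h : G.Adj a b <;> simp [fromEdgeSet_adj, h]

lemma hcn_le_card [DecidableEq V] {G : SimpleGraph V} {J : Finset (Sym2 V)}
    (hJ : IsHamiltonianGraph (G ⊔ fromEdgeSet ↑J)) : hcn G ≤ J.card := by
  obtain ⟨E, hE, hvalid, hH⟩ := exists_completion_card_le hJ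
  refine le_trans ?_ hE
  unfold hcn
  apply Nat.sInf_le
  exact ⟨E, rfl, hvalid, hH⟩

lemma exists_card_eq_hcn [DecidableEq V] {G : SimpleGraph V} {J : Finset (Sym2 V)}
    (hJ : IsHamiltonianGraph (G ⊔ fromEdgeSet ↑J)) :
    ∃ E : Finset (Sym2 V), E.card = hcn G ∧ IsHamiltonianGraph (G ⊔ fromEdgeSet ↑E) := by
  obtain ⟨E, -, hvalid, hH⟩ := exists_completion_card_le hJ
  have hmem : hcn G ∈ {k | ∃ E' : Finset (Sym2 V), E'.card = k ∧
      (∀ e ∈ E', ¬ e.IsDiag ∧ e ∉ G.edgeSet) ∧ IsHamiltonianGraph (G ⊔ fromEdgeSet ↑E')} :=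
    Nat.sInf_mem ⟨_, E, rfl, hvalid, hH⟩
  obtain ⟨E', hE', -, hH'⟩ := hmem
  exact ⟨E', hE', hH'⟩

theorem hcn_eq_ppn_of_not_hamiltonian [Fintype V] [DecidableEq V]
    (G : SimpleGraph V) (h3 : 3 ≤ Fintype.card V)
    (hG : ¬ IsHamiltonianGraph G) : hcn G = ppn G := by
  obtain ⟨L, hL, hLppn⟩ := exists_isPathPartition_length_eq_ppn G
  obtain ⟨J, hJL, hJ⟩ := hL.exists_isHamiltonianGraph_sup h3
  obtain ⟨E, hEhcn, hE⟩ := exists_card_eq_hcn hJ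
  obtain ⟨L', hL', hL'E⟩ := exists_isPathPartition_length_le_of_isHamiltonianGraph_sup hG hE
  have := hcn_le_card hJ
  have := hL'.ppn_le
  omega
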